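/- For all m ≥ 1 and n ≥ 0, the shifted Catalan Hankel determinant satisfies det(C_{n+i+j})_{i,j=0}^{m-1} = ∏_{1 ≤ i ≤ j ≤ n-1} (2m+i+j)/(i+j), where the empty product (n ≤ 1) equals 1. -/

import Mathlib

/-!
Write `H(m, n)` for the `m × m` Hankel determinant of `C_n, C_{n+1}, …`. The Desnanot–Jacobi
identity applied to a Hankel matrix gives the condensation recurrence
`H(m+2, n) H(m, n+2) = H(m+1, n) H(m+1, n+2) - H(m+1, n+1)²`. The product formula `P(m, n)`
satisfies the same recurrence (comparing ratios of neighbouring factors reduces it to an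
identity of rational functions), agrees with `H` for `m = 0, 1` (for `m = 1` this is the
recurrence `(n+2) C_{n+1} = 2(2n+1) C_n`), and never vanishes, so induction on `m` gives
`H = P`.

Desnanot–Jacobi itself comes from multiplying `X` by the identity matrix whose first and last
columns are replaced by those of `adjugate X`: this gives `det X` times the Jacobi relation
between the corner entries of `adjugate X` and the interior minor, and `det X` is cancelled in
the generic matrix over `ℤ[X_ij]`.
-/

open Finset
open scoped Nat

namespace Matrix

variable {R : Type*} [CommRing R]

theorem det_eq_det_submatrix_of_cols_eq_one {n ι : Type*} [Fintype n] [DecidableEq n]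
    [Fintype ι] [DecidableEq ι] (B : Matrix n n R) (e : ι → n) (he : Function.Injective e)
    (hB : ∀ k ∉ Set.range e, ∀ r, B r k = (1 : Matrix n n R) r k) :
    B.det = (B.submatrix e e).det := by
  have hfac : B = 1 + (B - 1).submatrix id e * (1 : Matrix n n R).submatrix e id := by
    ext r k
    simp only [add_apply, mul_apply, submatrix_apply, id, sub_apply, one_apply]
    by_cases hk : k ∈ Set.range e
    · obtain ⟨a, rfl⟩ := hk
      rw [Finset.sum_eq_single a (fun b _ hb => by simp [he.ne hb]) (by simp)]
      simp
    · rw [Finset.sum_eq_zero fun b _ => by simp [show e b ≠ k from fun h => hk ⟨b, h⟩]]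
      simpa [one_apply] using hB k hk r
  calc B.det = (1 + (1 : Matrix n n R).submatrix e id * (B - 1).submatrix id e).det := by
        conv_lhs => rw [hfac]
        exact det_one_add_mul_comm _ _
    _ = (B.submatrix e e).det := by
        rw [← submatrix_mul _ _ _ _ _ Function.bijective_id, one_mul]
        simp only [submatrix_sub, Pi.sub_apply, submatrix_one _ he, add_sub_cancel]

theorem det_eq_of_col_eq_pi_single {k : ℕ} (A : Matrix (Fin (k + 1)) (Fin (k + 1)) R)
    (i j : Fin (k + 1)) (c : R) (hA : ∀ r, A r j = (Pi.single i c : Fin (k + 1) → R) r) :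
    A.det = (-1) ^ (i + j : ℕ) * c * (A.submatrix i.succAbove j.succAbove).det := by
  rw [det_succ_column A j, Fintype.sum_eq_single i fun r hr => by simp [hA, hr]]
  simp [hA]

variable {m : ℕ}

theorem det_updateCol_zero_updateCol_last_pi_single (X : Matrix (Fin (m + 2)) (Fin (m + 2)) R)
    (d : R) :
    ((X.updateCol 0 (Pi.single 0 d)).updateCol (Fin.last _) (Pi.single (Fin.last _) d)).det =
      d * (d * (X.submatrix (Fin.castSucc ∘ Fin.succ) (Fin.castSucc ∘ Fin.succ)).det) := by
  set L : Fin (m + 2) := Fin.last _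
  have hL : (0 : Fin (m + 2)) ≠ L := Fin.last_pos.ne
  set N := (X.updateCol 0 (Pi.single 0 d)).updateCol L (Pi.single L d)
  rw [det_eq_of_col_eq_pi_single N L L d (by simp [N]), Fin.succAbove_last,
    det_eq_of_col_eq_pi_single (N.submatrix Fin.castSucc Fin.castSucc) 0 0 d
      (by simp [N, hL, Pi.single_apply]),
    Fin.succAbove_zero, submatrix_submatrix]
  have hinterior : N.submatrix (Fin.castSucc ∘ Fin.succ) (Fin.castSucc ∘ Fin.succ) =
      X.submatrix (Fin.castSucc ∘ Fin.succ) (Fin.castSucc ∘ Fin.succ) := by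
    ext i j
    have h0 : (j.succ.castSucc : Fin (m + 2)) ≠ 0 := Fin.castSucc_ne_zero_iff.2 j.succ_ne_zero
    have h1 : (j.succ.castSucc : Fin (m + 2)) ≠ L := Fin.castSucc_ne_last _
    simp only [N, submatrix_apply, Function.comp_apply, updateCol_ne h0, updateCol_ne h1]
  rw [hinterior, Even.neg_one_pow ⟨_, rfl⟩, Even.neg_one_pow ⟨_, rfl⟩]
  ring

theorem det_mul_desnanot_jacobi_adjugate (X : Matrix (Fin (m + 2)) (Fin (m + 2)) R) :
    X.det * (X.det * (X.submatrix (Fin.castSucc ∘ Fin.succ) (Fin.castSucc ∘ Fin.succ)).det) =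
      X.det * (X.adjugate 0 0 * X.adjugate (Fin.last _) (Fin.last _) -
        X.adjugate 0 (Fin.last _) * X.adjugate (Fin.last _) 0) := by
  set L : Fin (m + 2) := Fin.last _
  have hL : (0 : Fin (m + 2)) ≠ L := Fin.last_pos.ne
  let B : Matrix (Fin (m + 2)) (Fin (m + 2)) R :=
    ((1 : Matrix _ _ R).updateCol 0 (X.adjugate · 0)).updateCol L (X.adjugate · L)
  have hadj (k : Fin (m + 2)) : X *ᵥ (X.adjugate · k) = Pi.single k X.det := by
    ext r
    change (X * X.adjugate) r k = _
    simp [mul_adjugate, one_apply, Pi.single_apply]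
  have hXB : X * B = (X.updateCol 0 (Pi.single 0 X.det)).updateCol L (Pi.single L X.det) := by
    simp only [B, mul_updateCol, mul_one, hadj]
  have hB : B.det = X.adjugate 0 0 * X.adjugate L L - X.adjugate 0 L * X.adjugate L 0 := by
    have he : Function.Injective ![0, L] := by
      intro a b; fin_cases a <;> fin_cases b <;> simp [hL, hL.symm]
    have hcol : ∀ k ∉ Set.range ![0, L], ∀ r, B r k = (1 : Matrix _ _ R) r k := by
      intro k hk r
      have h0 : k ≠ 0 := fun h => hk ⟨0, h.symm⟩
      have h1 : k ≠ L := fun h => hk ⟨1, h.symm⟩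
      simp [B, h0, h1]
    rw [det_eq_det_submatrix_of_cols_eq_one B ![0, L] he hcol, det_fin_two]
    simp [B, hL]
  rw [← det_updateCol_zero_updateCol_last_pi_single, ← hXB, det_mul, hB]

theorem desnanot_jacobi_adjugate (X : Matrix (Fin (m + 2)) (Fin (m + 2)) R) :
    X.det * (X.submatrix (Fin.castSucc ∘ Fin.succ) (Fin.castSucc ∘ Fin.succ)).det =
      X.adjugate 0 0 * X.adjugate (Fin.last _) (Fin.last _) -
        X.adjugate 0 (Fin.last _) * X.adjugate (Fin.last _) 0 := by
  let A := mvPolynomialX (Fin (m + 2)) (Fin (m + 2)) ℤ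
  have hA :=
    mul_left_cancel₀ (det_mvPolynomialX_ne_zero _ ℤ) (det_mul_desnanot_jacobi_adjugate A)
  set f := MvPolynomial.aeval (R := ℤ) fun p : Fin (m + 2) × Fin (m + 2) => X p.1 p.2
  have hX : f.mapMatrix A = X := mvPolynomialX_mapMatrix_aeval ℤ X
  have hf := congrArg f hA
  rw [map_mul, map_sub, map_mul, map_mul, AlgHom.map_det, AlgHom.map_det] at hf
  rw [← hX, ← AlgHom.map_adjugate]
  exact hf

theorem desnanot_jacobi (X : Matrix (Fin (m + 2)) (Fin (m + 2)) R) :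
    X.det * (X.submatrix (Fin.castSucc ∘ Fin.succ) (Fin.castSucc ∘ Fin.succ)).det =
      (X.submatrix Fin.succ Fin.succ).det * (X.submatrix Fin.castSucc Fin.castSucc).det -
        (X.submatrix Fin.succ Fin.castSucc).det * (X.submatrix Fin.castSucc Fin.succ).det := by
  rw [desnanot_jacobi_adjugate]
  simp only [adjugate_fin_succ_eq_det_submatrix, Fin.succAbove_zero, Fin.succAbove_last,
    Fin.val_zero, Fin.val_last]
  have hsign : (-1 : R) ^ (m + 1) * (-1) ^ (m + 1) = 1 := by
    rw [← pow_add]; exact Even.neg_one_pow ⟨_, rfl⟩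
  linear_combination
    ((X.submatrix Fin.succ Fin.succ).det * (X.submatrix Fin.castSucc Fin.castSucc).det -
      (X.submatrix Fin.succ Fin.castSucc).det * (X.submatrix Fin.castSucc Fin.succ).det) * hsign

def hankel {α : Type*} (c : ℕ → α) (n m : ℕ) : Matrix (Fin m) (Fin m) α :=
  of fun i j => c (n + i + j)

theorem hankel_submatrix {α : Type*} (c : ℕ → α) {n n' k : ℕ} (f g : Fin k → Fin m)
    (hfg : ∀ i j, n + f i + g j = n' + i + j) :
    (hankel c n m).submatrix f g = hankel c n' k := by
  ext i j
  exact congrArg c (hfg i j)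

theorem det_hankel_condensation (c : ℕ → R) (n : ℕ) :
    (hankel c n (m + 2)).det * (hankel c (n + 2) m).det =
      (hankel c n (m + 1)).det * (hankel c (n + 2) (m + 1)).det -
        (hankel c (n + 1) (m + 1)).det ^ 2 := by
  have h := desnanot_jacobi (hankel c n (m + 2))
  rw [hankel_submatrix c _ _ (n' := n + 2) (by intro i j; simp; omega),
    hankel_submatrix c Fin.succ Fin.succ (n' := n + 2) (by intro i j; simp; omega),
    hankel_submatrix c Fin.castSucc Fin.castSucc (n' := n) (by intro i j; simp),
    hankel_submatrix c Fin.succ Fin.castSucc (n' := n + 1) (by intro i j; simp; omega),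
    hankel_submatrix c Fin.castSucc Fin.succ (n' := n + 1) (by intro i j; simp; omega),
    ← sq] at h
  linear_combination h

end Matrix

noncomputable def catalanHankelFactor (m j : ℕ) : ℚ :=
  ∏ i ∈ Finset.Icc 1 j, ((2 * m + i + j : ℚ) / (i + j : ℚ))

noncomputable def catalanHankelProd (m n : ℕ) : ℚ :=
  ∏ j ∈ Finset.Icc 1 (n - 1), catalanHankelFactor m j

theorem factorial_mul_prod_Icc_add (x j : ℕ) :
    (x ! : ℚ) * ∏ i ∈ Icc 1 j, ((x + i : ℕ) : ℚ) = (x + j)! := by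
  induction j with
  | zero => simp
  | succ j ih =>
    rw [prod_Icc_succ_top (by omega), ← mul_assoc, ih, ← add_assoc, Nat.factorial_succ]
    push_cast
    ring

theorem catalanHankelFactor_eq_factorial (m j : ℕ) : catalanHankelFactor m j =
    ((2 * m + 2 * j)! * j ! : ℚ) / ((2 * m + j)! * (2 * j)!) := by
  have hnum := factorial_mul_prod_Icc_add (2 * m + j) j
  have hden := factorial_mul_prod_Icc_add j j
  rw [show 2 * m + j + j = 2 * m + 2 * j by ring] at hnum
  rw [show j + j = 2 * j by ring] at hden
  have h : catalanHankelFactor m j =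
      (∏ i ∈ Icc 1 j, ((2 * m + j + i : ℕ) : ℚ)) /
        ∏ i ∈ Icc 1 j, ((j + i : ℕ) : ℚ) := by
    rw [catalanHankelFactor, ← prod_div_distrib]
    refine prod_congr rfl fun i _ => ?_
    push_cast
    ring_nf
  have hpos : (∏ i ∈ Icc 1 j, ((j + i : ℕ) : ℚ)) ≠ 0 :=
    prod_ne_zero_iff.2 fun i hi => Nat.cast_ne_zero.2 (by have := (mem_Icc.1 hi).1; omega)
  rw [h, div_eq_div_iff hpos (by positivity), ← hnum, ← hden]
  ring

theorem catalanHankelFactor_succ_left (m j : ℕ) :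
    catalanHankelFactor (m + 1) j * ((2 * m + j + 2) * (2 * m + j + 1)) =
      catalanHankelFactor m j * ((2 * m + 2 * j + 2) * (2 * m + 2 * j + 1)) := by
  rw [catalanHankelFactor_eq_factorial, catalanHankelFactor_eq_factorial,
    show 2 * (m + 1) + 2 * j = 2 * m + 2 * j + 1 + 1 by ring,
    show 2 * (m + 1) + j = 2 * m + j + 1 + 1 by ring]
  simp only [Nat.factorial_succ]
  push_cast
  field_simp
  ring

theorem catalanHankelFactor_succ_right (m n : ℕ) :
    catalanHankelFactor m (n + 1) * ((2 * m + n + 1) * (2 * n + 1)) =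
      catalanHankelFactor m n * ((m + n + 1) * (2 * m + 2 * n + 1)) := by
  rw [catalanHankelFactor_eq_factorial, catalanHankelFactor_eq_factorial,
    show 2 * m + 2 * (n + 1) = 2 * m + 2 * n + 1 + 1 by ring,
    show 2 * m + (n + 1) = 2 * m + n + 1 by ring,
    show 2 * (n + 1) = 2 * n + 1 + 1 by ring]
  simp only [Nat.factorial_succ]
  push_cast
  field_simp
  ring

theorem catalanHankelFactor_pos (m j : ℕ) : 0 < catalanHankelFactor m j := by
  rw [catalanHankelFactor_eq_factorial]
  positivity

theorem catalanHankelFactor_zero_left (j : ℕ) : catalanHankelFactor 0 j = 1 := by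
  rw [catalanHankelFactor_eq_factorial]
  simp only [mul_zero, zero_add]
  rw [div_eq_one_iff_eq (by positivity), mul_comm]

theorem catalanHankelProd_zero_right (m : ℕ) : catalanHankelProd m 0 = 1 := rfl

theorem catalanHankelProd_two (m : ℕ) : catalanHankelProd m 2 = m + 1 := by
  change ∏ j ∈ Icc 1 1, catalanHankelFactor m j = m + 1
  rw [Icc_self, prod_singleton, catalanHankelFactor, Icc_self, prod_singleton]
  push_cast
  ring

theorem catalanHankelProd_pos (m n : ℕ) : 0 < catalanHankelProd m n :=
  prod_pos fun j _ => catalanHankelFactor_pos m j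

theorem catalanHankelProd_succ (m n : ℕ) :
    catalanHankelProd m (n + 1) = catalanHankelProd m n * catalanHankelFactor m n := by
  cases n with
  | zero => simp [catalanHankelProd, catalanHankelFactor]
  | succ n =>
    simp only [catalanHankelProd, Nat.add_sub_cancel]
    exact prod_Icc_succ_top (by omega) _

theorem catalanHankelProd_zero_left (n : ℕ) : catalanHankelProd 0 n = 1 :=
  prod_eq_one fun j _ => catalanHankelFactor_zero_left j

theorem succ_succ_mul_catalan_succ (n : ℕ) :
    (n + 2) * catalan (n + 1) = 2 * (2 * n + 1) * catalan n := by
  apply Nat.eq_of_mul_eq_mul_left n.succ_pos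
  calc (n + 1) * ((n + 2) * catalan (n + 1)) = (n + 1) * (n + 1).centralBinom := by
        rw [← succ_mul_catalan_eq_centralBinom]
    _ = 2 * (2 * n + 1) * n.centralBinom := Nat.succ_mul_centralBinom_succ n
    _ = (n + 1) * (2 * (2 * n + 1) * catalan n) := by
        rw [← succ_mul_catalan_eq_centralBinom]; ring

theorem catalanHankelProd_one_left (n : ℕ) : catalanHankelProd 1 n = catalan n := by
  induction n with
  | zero => simp [catalanHankelProd]
  | succ n ih =>
    have hfac := catalanHankelFactor_succ_left 0 n
    have hcat : ((n + 2) * catalan (n + 1) : ℚ) = 2 * (2 * n + 1) * catalan n := by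
      exact_mod_cast succ_succ_mul_catalan_succ n
    rw [catalanHankelFactor_zero_left] at hfac
    rw [catalanHankelProd_succ, ih]
    apply mul_right_cancel₀ (show ((n + 2) * (n + 1) : ℚ) ≠ 0 by positivity)
    linear_combination (catalan n : ℚ) * hfac - (n + 1) * hcat

theorem catalanHankelProd_shift (m n : ℕ) :
    catalanHankelProd (m + 2) n * catalanHankelProd m (n + 2) *
        ((2 * m + 2 * n + 4) * (2 * m + 2 * n + 3)) =
      catalanHankelProd (m + 1) n * catalanHankelProd (m + 1) (n + 2) *
        ((2 * m + 3) * (2 * m + 2)) := by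
  induction n with
  | zero =>
    simp only [Nat.zero_add, catalanHankelProd_zero_right, catalanHankelProd_two]
    push_cast
    ring
  | succ n ih =>
    have h₁ : catalanHankelFactor (m + 2) n * _ = _ := catalanHankelFactor_succ_left (m + 1) n
    have h₂ := catalanHankelFactor_succ_left m (n + 2)
    rw [catalanHankelProd_succ (m + 2), show n + 1 + 2 = n + 2 + 1 by ring,
      catalanHankelProd_succ m (n + 2), catalanHankelProd_succ (m + 1) n,
      catalanHankelProd_succ (m + 1) (n + 2)]
    push_cast at h₁ h₂ ⊢
    linear_combination catalanHankelProd (m + 2) n * catalanHankelProd m (n + 2) *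
        (catalanHankelFactor (m + 1) (n + 2) * h₁ - catalanHankelFactor (m + 2) n * h₂) +
      catalanHankelFactor (m + 1) n * catalanHankelFactor (m + 1) (n + 2) * ih

theorem catalanHankelProd_condensation (m n : ℕ) :
    catalanHankelProd (m + 2) n * catalanHankelProd m (n + 2) =
      catalanHankelProd (m + 1) n * catalanHankelProd (m + 1) (n + 2) -
        catalanHankelProd (m + 1) (n + 1) ^ 2 := by
  have hshift := catalanHankelProd_shift m n
  have hg := catalanHankelFactor_succ_right (m + 1) n
  rw [show n + 2 = n + 1 + 1 by ring, catalanHankelProd_succ (m + 1) (n + 1),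
    catalanHankelProd_succ (m + 1) n] at hshift ⊢
  push_cast at hg
  apply mul_right_cancel₀
    (show ((2 * m + 2 * n + 4) * (2 * m + 2 * n + 3) : ℚ) ≠ 0 by positivity)
  linear_combination hshift -
    2 * catalanHankelProd (m + 1) n ^ 2 * catalanHankelFactor (m + 1) n * hg

theorem shifted_catalan_hankel_det_general (m n : ℕ) :
    Matrix.det (Matrix.of fun i j : Fin m => (catalan (n + i + j) : ℚ)) =
      ∏ j ∈ Finset.Icc 1 (n - 1), ∏ i ∈ Finset.Icc 1 j,
        ((2 * m + i + j : ℚ) / (i + j : ℚ)) := by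
  change (Matrix.hankel (fun k => (catalan k : ℚ)) n m).det = catalanHankelProd m n
  induction m using Nat.twoStepInduction generalizing n with
  | zero => simp [catalanHankelProd_zero_left]
  | one => simp [Matrix.hankel, catalanHankelProd_one_left]
  | more m ih₀ ih₁ =>
    apply mul_right_cancel₀ (catalanHankelProd_pos m (n + 2)).ne'
    calc _ = (Matrix.hankel _ n (m + 2)).det * (Matrix.hankel _ (n + 2) m).det := by rw [ih₀]
      _ = _ := Matrix.det_hankel_condensation _ n
      _ = catalanHankelProd (m + 1) n * catalanHankelProd (m + 1) (n + 2) -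
          catalanHankelProd (m + 1) (n + 1) ^ 2 := by rw [ih₁, ih₁, ih₁]
      _ = _ := (catalanHankelProd_condensation m n).symm

theorem shifted_catalan_hankel_det (m n : ℕ) (hm : 1 ≤ m) :
    Matrix.det (Matrix.of fun i j : Fin m => (catalan (n + i + j) : ℚ)) =
      ∏ j ∈ Finset.Icc 1 (n - 1), ∏ i ∈ Finset.Icc 1 j,
        ((2 * m + i + j : ℚ) / (i + j : ℚ)) :=
  shifted_catalan_hankel_det_general m n
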